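/- arXiv:2205.13863 — 8 statements merged into one kernel-verified Lean document; each statement's English description precedes it below -/
import Mathlib

section
/- Let d ≥ 1, ε > 0, and let A, B ⊆ [0,1]^d be nonempty sets that are 2ε-separated under the ℓ∞ norm. Then the distance-ratio classifier f*(x) = (d∞(x,B) − d∞(x,A))/(d∞(x,A) + d∞(x,B)) is Lipschitz continuous on all of ℝ^d with Lipschitz constant 1/ε with respect to the ℓ∞ norm. -/
/-!
Write `g = d∞(·, A)` and `h = d∞(·, B)`; both are 1-Lipschitz. Separation gives `g + h ≥ 2ε`
everywhere, by the triangle inequality through a point of `A` and a point of `B`. Then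
`f* = (h - g)/(g + h)` and `f*(x) - f*(y) = 2 (h(x) g(y) - g(x) h(y)) / ((g + h)(x) (g + h)(y))`,
whose numerator is at most `2 ‖x - y‖ (g + h)(y)` in absolute value, so that
`|f*(x) - f*(y)| ≤ 2 ‖x - y‖ / (g + h)(x) ≤ ‖x - y‖ / ε`.
-/

/-- The distance-ratio classifier under the ℓ∞ norm (the norm on `Fin d → ℝ`
is the sup norm). -/
noncomputable def distRatioInf (d : ℕ) (A B : Set (Fin d → ℝ)) (x : Fin d → ℝ) : ℝ :=
  (Metric.infDist x B - Metric.infDist x A) /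
    (Metric.infDist x A + Metric.infDist x B)

lemma abs_sub_div_add_sub_sub_div_add_le {f g f' g' δ ε : ℝ} (hε : 0 < ε)
    (hf' : 0 ≤ f') (hg' : 0 ≤ g') (hS : 2 * ε ≤ f + g) (hS' : 2 * ε ≤ f' + g')
    (hf : |f - f'| ≤ δ) (hg : |g - g'| ≤ δ) :
    |(g - f) / (f + g) - (g' - f') / (f' + g')| ≤ δ / ε := by
  have hSpos : 0 < f + g := by linarith
  have hSpos' : 0 < f' + g' := by linarith
  have hδ : 0 ≤ δ := (abs_nonneg _).trans hf
  have hdiff : (g - f) / (f + g) - (g' - f') / (f' + g') =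
      2 * (g * f' - f * g') / ((f + g) * (f' + g')) := by
    field_simp
    ring
  have hnum : |g * f' - f * g'| ≤ δ * (f' + g') :=
    calc |g * f' - f * g'| = |(g - g') * f' - (f - f') * g'| := by ring_nf
      _ ≤ |g - g'| * f' + |f - f'| * g' := by
        refine (abs_sub _ _).trans_eq ?_
        rw [abs_mul, abs_mul, abs_of_nonneg hf', abs_of_nonneg hg']
      _ ≤ δ * (f' + g') := by nlinarith
  rw [hdiff, abs_div, abs_mul, abs_two, abs_of_pos (mul_pos hSpos hSpos'),
    div_le_div_iff₀ (mul_pos hSpos hSpos') hε]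
  calc 2 * |g * f' - f * g'| * ε ≤ 2 * (δ * (f' + g')) * ε := by gcongr
    _ ≤ δ * ((f + g) * (f' + g')) := by nlinarith [mul_nonneg hδ hSpos'.le]

lemma LipschitzWith.sub_div_add {α : Type*} [PseudoMetricSpace α] {K : NNReal} {ε : ℝ}
    {f g : α → ℝ} (hε : 0 < ε) (hf : LipschitzWith K f) (hg : LipschitzWith K g)
    (hf₀ : ∀ x, 0 ≤ f x) (hg₀ : ∀ x, 0 ≤ g x) (hfg : ∀ x, 2 * ε ≤ f x + g x) :
    LipschitzWith (Real.toNNReal (K / ε)) fun x => (g x - f x) / (f x + g x) := by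
  refine LipschitzWith.of_dist_le' fun x y => ?_
  rw [div_mul_eq_mul_div, Real.dist_eq]
  apply abs_sub_div_add_sub_sub_div_add_le hε (hf₀ y) (hg₀ y) (hfg x) (hfg y)
  · simpa only [Real.dist_eq] using hf.dist_le_mul x y
  · simpa only [Real.dist_eq] using hg.dist_le_mul x y

lemma Metric.two_mul_le_infDist_add_infDist {α : Type*} [PseudoMetricSpace α] {A B : Set α}
    {ε : ℝ} (hA : A.Nonempty) (hB : B.Nonempty) (hsep : ∀ a ∈ A, ∀ b ∈ B, 2 * ε ≤ dist a b)
    (x : α) : 2 * ε ≤ infDist x A + infDist x B := by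
  suffices 2 * ε - infDist x A ≤ infDist x B by linarith
  refine (le_infDist hB).2 fun b hb => ?_
  suffices 2 * ε - dist x b ≤ infDist x A by linarith
  refine (le_infDist hA).2 fun a ha => ?_
  linarith [hsep a ha b hb, dist_triangle_left a b x]

theorem stmt_0_general (d : ℕ) (ε : ℝ) (hε : 0 < ε)
    (A B : Set (Fin d → ℝ)) (hA : A.Nonempty) (hB : B.Nonempty)
    (hsep : ∀ a ∈ A, ∀ b ∈ B, 2 * ε ≤ ‖a - b‖) :
    LipschitzWith (Real.toNNReal (1 / ε)) (distRatioInf d A B) := by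
  have hsum := Metric.two_mul_le_infDist_add_infDist hA hB
    (by simpa only [dist_eq_norm] using hsep)
  have h := (Metric.lipschitz_infDist_pt A).sub_div_add hε (Metric.lipschitz_infDist_pt B)
    (fun _ => Metric.infDist_nonneg) (fun _ => Metric.infDist_nonneg) hsum
  rw [NNReal.coe_one] at h
  exact h

theorem stmt_0 (d : ℕ) (hd : 1 ≤ d) (ε : ℝ) (hε : 0 < ε)
    (A B : Set (Fin d → ℝ)) (hA : A.Nonempty) (hB : B.Nonempty)
    (hAc : A ⊆ Set.Icc 0 1) (hBc : B ⊆ Set.Icc 0 1)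
    (hsep : ∀ a ∈ A, ∀ b ∈ B, 2 * ε ≤ ‖a - b‖) :
    LipschitzWith (Real.toNNReal (1 / ε)) (distRatioInf d A B) :=
  stmt_0_general d ε hε A B hA hB hsep
end

section
/- Let d ≥ 1, ε > 0, and let A, B ⊆ [0,1]^d be nonempty sets that are 2ε-separated under the ℓ2 (Euclidean) norm, and let f* be the distance-ratio classifier. Then f*(a) = 1 for every a ∈ A and f*(b) = −1 for every b ∈ B; moreover, for every x ∈ A and every x' ∈ ℝ^d with ‖x' − x‖₂ < ε one has f*(x') > 0, and for every x ∈ B and every x' ∈ ℝ^d with ‖x' − x‖₂ < ε one has f*(x') < 0. In particular f* has zero robust test error at any robust radius strictly smaller than ε. -/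
/-!
Separation gives every point of `A` distance at least `2ε` from `B`. Moving by less than `ε`
keeps the distance to `A` below `ε` and, since `infDist · B` is `1`-Lipschitz, the distance
to `B` at least `ε`; so the numerator of the distance ratio stays positive. The statements
for `B` follow from those for `A` because swapping `A` and `B` negates the classifier.
-/

/-- The distance-ratio classifier under the ℓ2 (Euclidean) norm. -/
noncomputable def distRatioL2 (d : ℕ) (A B : Set (EuclideanSpace ℝ (Fin d)))
    (x : EuclideanSpace ℝ (Fin d)) : ℝ :=
  (Metric.infDist x B - Metric.infDist x A) /
    (Metric.infDist x A + Metric.infDist x B)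

open Metric

theorem Metric.infDist_lt_infDist_of_dist_lt {X : Type*} [PseudoMetricSpace X] {A B : Set X}
    {x y : X} {ε : ℝ} (hx : x ∈ A) (hxB : 2 * ε ≤ infDist x B) (hy : dist y x < ε) :
    infDist y A < infDist y B :=
  calc infDist y A ≤ dist y x := infDist_le_dist_of_mem hx
    _ < infDist x B - dist x y := by rw [dist_comm] at hy ⊢; linarith
    _ ≤ infDist y B := by linarith [infDist_le_infDist_add_dist (x := x) (y := y) (s := B)]

section DistRatio

variable {d : ℕ} {A B : Set (EuclideanSpace ℝ (Fin d))} {x : EuclideanSpace ℝ (Fin d)}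

theorem distRatioL2_swap : distRatioL2 d B A x = -distRatioL2 d A B x := by
  rw [distRatioL2, distRatioL2, add_comm, ← neg_div, neg_sub]

theorem distRatioL2_eq_one_of_mem (hx : x ∈ A) (hxB : 0 < infDist x B) :
    distRatioL2 d A B x = 1 := by
  rw [distRatioL2, infDist_zero_of_mem hx, sub_zero, zero_add, div_self hxB.ne']

theorem distRatioL2_pos_of_infDist_lt (h : infDist x A < infDist x B) :
    0 < distRatioL2 d A B x :=
  div_pos (sub_pos.2 h) (by linarith [infDist_nonneg (x := x) (s := A)])

theorem distRatioL2_pos_of_dist_lt {x' : EuclideanSpace ℝ (Fin d)} {ε : ℝ} (hx : x ∈ A)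
    (hxB : 2 * ε ≤ infDist x B) (hx' : ‖x' - x‖ < ε) : 0 < distRatioL2 d A B x' :=
  distRatioL2_pos_of_infDist_lt <|
    infDist_lt_infDist_of_dist_lt hx hxB (by rwa [dist_eq_norm])

end DistRatio

theorem stmt_3_general (d : ℕ) (ε : ℝ) (hε : 0 < ε)
    (A B : Set (EuclideanSpace ℝ (Fin d))) (hA : A.Nonempty) (hB : B.Nonempty)
    (hsep : ∀ a ∈ A, ∀ b ∈ B, 2 * ε ≤ ‖a - b‖) :
    (∀ a ∈ A, distRatioL2 d A B a = 1) ∧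
    (∀ b ∈ B, distRatioL2 d A B b = -1) ∧
    (∀ x ∈ A, ∀ x' : EuclideanSpace ℝ (Fin d), ‖x' - x‖ < ε → 0 < distRatioL2 d A B x') ∧
    (∀ x ∈ B, ∀ x' : EuclideanSpace ℝ (Fin d), ‖x' - x‖ < ε → distRatioL2 d A B x' < 0) := by
  have hAB : ∀ a ∈ A, 2 * ε ≤ infDist a B := fun a ha =>
    (le_infDist hB).2 fun b hb => by simpa only [dist_eq_norm] using hsep a ha b hb
  have hBA : ∀ b ∈ B, 2 * ε ≤ infDist b A := fun b hb =>
    (le_infDist hA).2 fun a ha => by simpa only [dist_comm b, dist_eq_norm] using hsep a ha b hb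
  refine ⟨fun a ha => distRatioL2_eq_one_of_mem ha (by linarith [hAB a ha]),
    fun b hb => ?_, fun x hx x' hx' => distRatioL2_pos_of_dist_lt hx (hAB x hx) hx',
    fun x hx x' hx' => ?_⟩
  · rw [← neg_neg (distRatioL2 d A B b), ← distRatioL2_swap,
      distRatioL2_eq_one_of_mem hb (by linarith [hBA b hb])]
  · rw [← neg_pos, ← distRatioL2_swap]
    exact distRatioL2_pos_of_dist_lt hx (hBA x hx) hx'

theorem stmt_3 (d : ℕ) (hd : 1 ≤ d) (ε : ℝ) (hε : 0 < ε)
    (A B : Set (EuclideanSpace ℝ (Fin d))) (hA : A.Nonempty) (hB : B.Nonempty)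
    (hAc : A ⊆ {x | ∀ i, x i ∈ Set.Icc (0 : ℝ) 1})
    (hBc : B ⊆ {x | ∀ i, x i ∈ Set.Icc (0 : ℝ) 1})
    (hsep : ∀ a ∈ A, ∀ b ∈ B, 2 * ε ≤ ‖a - b‖) :
    (∀ a ∈ A, distRatioL2 d A B a = 1) ∧
    (∀ b ∈ B, distRatioL2 d A B b = -1) ∧
    (∀ x ∈ A, ∀ x' : EuclideanSpace ℝ (Fin d), ‖x' - x‖ < ε → 0 < distRatioL2 d A B x') ∧
    (∀ x ∈ B, ∀ x' : EuclideanSpace ℝ (Fin d), ‖x' - x‖ < ε → distRatioL2 d A B x' < 0) :=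
  stmt_3_general d ε hε A B hA hB hsep
end

section
/- Let d ≥ 1, ε > 0, c ∈ (0,1), and let A, B ⊆ [0,1]^d be nonempty sets that are 2ε-separated under the ℓ∞ norm, with distance-ratio classifier f*. If a function f : ℝ^d → ℝ satisfies |f(x) − f*(x)| < 1 − c for every x ∈ ℝ^d, then f robustly classifies A and B at radius cε: for every x ∈ A and every x' ∈ ℝ^d with ‖x' − x‖∞ ≤ cε one has f(x') > 0, and for every x ∈ B and every x' ∈ ℝ^d with ‖x' − x‖∞ ≤ cε one has f(x') < 0. -/
/-!
A point `x'` within `cε` of `a ∈ A` has `d(x', A) ≤ cε`, while `2ε`-separation and the triangle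
inequality give `d(x', B) ≥ (2 - c)ε`. For such distances the ratio `(d_B - d_A)/(d_A + d_B)` is at
least `1 - c`, so an approximation of `f*` within `1 - c` stays positive at `x'`. The statement for
`B` is the same one, since swapping `A` and `B` negates `f*`.
-/

open Metric

lemma sub_le_infDist_of_forall_le_dist {X : Type*} [PseudoMetricSpace X] {B : Set X}
    (hB : B.Nonempty) {x x' : X} {s r : ℝ} (hsep : ∀ b ∈ B, s ≤ dist x b)
    (hx' : dist x' x ≤ r) : s - r ≤ infDist x' B := by
  have hx : s ≤ infDist x B := (le_infDist hB).2 hsep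
  linarith [infDist_le_infDist_add_dist (x := x) (y := x') (s := B), dist_comm x x']

lemma one_sub_le_sub_div_add {ε c dA dB : ℝ} (hε : 0 < ε) (hc : c < 1) (hdA₀ : 0 ≤ dA)
    (hdA : dA ≤ c * ε) (hdB : (2 - c) * ε ≤ dB) :
    1 - c ≤ (dB - dA) / (dA + dB) := by
  have hc₀ : 0 ≤ c := nonneg_of_mul_nonneg_left (hdA₀.trans hdA) hε
  rw [le_div_iff₀ (by nlinarith)]
  linarith [mul_le_mul_of_nonneg_left hdA (by linarith : (0 : ℝ) ≤ 2 - c),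
    mul_le_mul_of_nonneg_left hdB hc₀]

lemma distRatioInf_comm (d : ℕ) (A B : Set (Fin d → ℝ)) (x : Fin d → ℝ) :
    distRatioInf d B A x = -distRatioInf d A B x := by
  rw [distRatioInf, distRatioInf, ← neg_div, neg_sub, add_comm]

lemma one_sub_le_distRatioInf {d : ℕ} {ε c : ℝ} (hε : 0 < ε) (hc : c < 1)
    {A B : Set (Fin d → ℝ)} (hB : B.Nonempty) (hsep : ∀ a ∈ A, ∀ b ∈ B, 2 * ε ≤ ‖a - b‖)
    {x x' : Fin d → ℝ} (hx : x ∈ A) (hx' : ‖x' - x‖ ≤ c * ε) :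
    1 - c ≤ distRatioInf d A B x' := by
  rw [← dist_eq_norm] at hx'
  have hdA : infDist x' A ≤ c * ε := (infDist_le_dist_of_mem hx).trans hx'
  have hdB : 2 * ε - c * ε ≤ infDist x' B :=
    sub_le_infDist_of_forall_le_dist hB (fun b hb ↦ dist_eq_norm x b ▸ hsep x hx b hb) hx'
  exact one_sub_le_sub_div_add hε hc infDist_nonneg hdA (by linarith)

theorem stmt_4_general (d : ℕ) (ε c : ℝ) (hε : 0 < ε) (hc : c ∈ Set.Ioo (0 : ℝ) 1)
    (A B : Set (Fin d → ℝ)) (hA : A.Nonempty) (hB : B.Nonempty)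
    (hsep : ∀ a ∈ A, ∀ b ∈ B, 2 * ε ≤ ‖a - b‖)
    (f : (Fin d → ℝ) → ℝ)
    (happrox : ∀ x : Fin d → ℝ, |f x - distRatioInf d A B x| < 1 - c) :
    (∀ x ∈ A, ∀ x' : Fin d → ℝ, ‖x' - x‖ ≤ c * ε → 0 < f x') ∧
    (∀ x ∈ B, ∀ x' : Fin d → ℝ, ‖x' - x‖ ≤ c * ε → f x' < 0) := by
  have hsep' : ∀ b ∈ B, ∀ a ∈ A, 2 * ε ≤ ‖b - a‖ := fun b hb a ha ↦
    norm_sub_rev a b ▸ hsep a ha b hb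
  refine ⟨fun x hx x' hx' ↦ ?_, fun x hx x' hx' ↦ ?_⟩
  · have hf := one_sub_le_distRatioInf hε hc.2 hB hsep hx hx'
    linarith [(abs_lt.1 (happrox x')).1]
  · have hf := one_sub_le_distRatioInf hε hc.2 hA hsep' hx hx'
    rw [distRatioInf_comm] at hf
    linarith [(abs_lt.1 (happrox x')).2]

theorem stmt_4 (d : ℕ) (hd : 1 ≤ d) (ε c : ℝ) (hε : 0 < ε) (hc : c ∈ Set.Ioo (0 : ℝ) 1)
    (A B : Set (Fin d → ℝ)) (hA : A.Nonempty) (hB : B.Nonempty)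
    (hAc : A ⊆ Set.Icc 0 1) (hBc : B ⊆ Set.Icc 0 1)
    (hsep : ∀ a ∈ A, ∀ b ∈ B, 2 * ε ≤ ‖a - b‖)
    (f : (Fin d → ℝ) → ℝ)
    (happrox : ∀ x : Fin d → ℝ, |f x - distRatioInf d A B x| < 1 - c) :
    (∀ x ∈ A, ∀ x' : Fin d → ℝ, ‖x' - x‖ ≤ c * ε → 0 < f x') ∧
    (∀ x ∈ B, ∀ x' : Fin d → ℝ, ‖x' - x‖ ≤ c * ε → f x' < 0) :=
  stmt_4_general d ε c hε hc A B hA hB hsep f happrox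
end

section
/- Let d ≥ 1, ε ∈ (0, 1/2), and K = ⌊1/(2ε)⌋ + 1. Let F be a family of functions from ℝ^d to ℝ with the property that for every pair of disjoint sets A, B ⊆ [0,1]^d that are 2ε-separated under the ℓ∞ norm, there exists f ∈ F with f(a) > 0 for all a ∈ A and f(b) < 0 for all b ∈ B. Then there exists a finite set S ⊆ [0,1]^d with |S| = K^d that is sign-shattered by F. -/
/-!
Place the points of the grid `2ε · {0, …, K-1}^d`. Since `2ε (K - 1) = 2ε ⌊1/(2ε)⌋ ≤ 1` the grid
lies in the unit cube, and distinct grid points differ by at least `2ε` in some coordinate. Hence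
for every `T ⊆ S` the sets `T` and `S \ T` are disjoint and `2ε`-separated in the `ℓ∞` norm, and
the separation hypothesis supplies a function positive on `T` and negative on `S \ T`.
-/

/-- A family `F` of real-valued functions sign-shatters a finite set `S` if for
every subset `T ⊆ S` there is `f ∈ F` which is positive on `T` and negative on
`S \ T`. -/
def SignShatters {X : Type*} (F : Set (X → ℝ)) (S : Finset X) : Prop :=
  ∀ T ⊆ S, ∃ f ∈ F, (∀ x ∈ T, 0 < f x) ∧ (∀ x ∈ S, x ∉ T → f x < 0)

theorem signShatters_of_pairwise_separated {E : Type*} [SeminormedAddCommGroup E]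
    {F : Set (E → ℝ)} {X : Set E} {r : ℝ}
    (hF : ∀ A B : Set E, Disjoint A B → A ⊆ X → B ⊆ X → (∀ a ∈ A, ∀ b ∈ B, r ≤ ‖a - b‖) →
      ∃ f ∈ F, (∀ a ∈ A, 0 < f a) ∧ (∀ b ∈ B, f b < 0))
    {S : Finset E} (hSX : ↑S ⊆ X) (hS : (S : Set E).Pairwise fun a b => r ≤ ‖a - b‖) :
    SignShatters F S := by
  intro T hT
  have hTS : (T : Set E) ⊆ S := Finset.coe_subset.mpr hT
  obtain ⟨f, hf, hpos, hneg⟩ := hF T (↑S \ ↑T) Set.disjoint_sdiff_right (hTS.trans hSX)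
    (Set.sdiff_subset.trans hSX) fun a ha b hb => hS (hTS ha) hb.1 (ne_of_mem_of_not_mem ha hb.2)
  exact ⟨f, hf, hpos, fun x hx hxT => hneg x ⟨hx, hxT⟩⟩

theorem mul_floor_one_div_le_one {t : ℝ} (ht : 0 < t) : t * ⌊1 / t⌋₊ ≤ 1 :=
  (le_div_iff₀' ht).mp (Nat.floor_le (by positivity))

section LatticePoint

variable {ι : Type*} {K : ℕ} {h : ℝ}

def latticePoint (h : ℝ) (c : ι → Fin K) : ι → ℝ := fun i => h * c i

theorem latticePoint_injective (hh : h ≠ 0) :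
    Function.Injective (latticePoint (ι := ι) (K := K) h) := fun c c' hcc' =>
  funext fun i => Fin.ext <| by exact_mod_cast mul_left_cancel₀ hh (congrFun hcc' i)

theorem latticePoint_mem_Icc (hh : 0 ≤ h) (hK : h * (K - 1 : ℕ) ≤ 1) (c : ι → Fin K) :
    latticePoint h c ∈ Set.Icc 0 1 := by
  refine ⟨fun i => mul_nonneg hh (Nat.cast_nonneg _), fun i => hK.trans' ?_⟩
  have hci : (c i : ℕ) ≤ K - 1 := Nat.le_pred_of_lt (c i).isLt
  exact mul_le_mul_of_nonneg_left (by exact_mod_cast hci) hh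

theorem le_norm_latticePoint_sub [Fintype ι] (hh : 0 ≤ h) {c c' : ι → Fin K} (hcc' : c ≠ c') :
    h ≤ ‖latticePoint h c - latticePoint h c'‖ := by
  obtain ⟨i, hi⟩ := Function.ne_iff.mp hcc'
  have hdiff : (1 : ℝ) ≤ |(c i : ℝ) - c' i| := by
    have : ((c i : ℕ) : ℤ) ≠ (c' i : ℕ) := by exact_mod_cast Fin.val_ne_of_ne hi
    exact_mod_cast Int.one_le_abs (sub_ne_zero.mpr this)
  calc h = h * 1 := (mul_one h).symm
    _ ≤ h * |(c i : ℝ) - c' i| := mul_le_mul_of_nonneg_left hdiff hh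
    _ = ‖(latticePoint h c - latticePoint h c') i‖ := by
      simp only [latticePoint, Pi.sub_apply, Real.norm_eq_abs, ← mul_sub, abs_mul, abs_of_nonneg hh]
    _ ≤ ‖latticePoint h c - latticePoint h c'‖ := norm_le_pi_norm _ i

end LatticePoint

theorem stmt_6_general (d : ℕ) (ε : ℝ) (hε : ε ∈ Set.Ioo (0 : ℝ) (1/2))
    (K : ℕ) (hK : K = Nat.floor (1 / (2 * ε)) + 1)
    (F : Set ((Fin d → ℝ) → ℝ))
    (hF : ∀ A B : Set (Fin d → ℝ), Disjoint A B →
      A ⊆ Set.Icc 0 1 → B ⊆ Set.Icc 0 1 →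
      (∀ a ∈ A, ∀ b ∈ B, 2 * ε ≤ ‖a - b‖) →
      ∃ f ∈ F, (∀ a ∈ A, 0 < f a) ∧ (∀ b ∈ B, f b < 0)) :
    ∃ S : Finset (Fin d → ℝ), ↑S ⊆ Set.Icc (0 : Fin d → ℝ) 1 ∧
      S.card = K ^ d ∧ SignShatters F S := by
  have h2ε : 0 < 2 * ε := by linarith [hε.1]
  set S := Finset.univ.image (latticePoint (ι := Fin d) (K := K) (2 * ε))
  have hS_Icc : ↑S ⊆ Set.Icc (0 : Fin d → ℝ) 1 := by
    rw [Finset.coe_image]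
    rintro _ ⟨c, -, rfl⟩
    exact latticePoint_mem_Icc h2ε.le (by simpa [hK] using mul_floor_one_div_le_one h2ε) c
  refine ⟨S, hS_Icc, ?_, signShatters_of_pairwise_separated hF hS_Icc ?_⟩
  · rw [Finset.card_image_of_injective _ (latticePoint_injective h2ε.ne'), Finset.card_univ,
      Fintype.card_fun, Fintype.card_fin, Fintype.card_fin]
  · rw [Finset.coe_image]
    rintro _ ⟨c, -, rfl⟩ _ ⟨c', -, rfl⟩ hne
    exact le_norm_latticePoint_sub h2ε.le fun h => hne (congrArg _ h)

theorem stmt_6 (d : ℕ) (hd : 1 ≤ d) (ε : ℝ) (hε : ε ∈ Set.Ioo (0 : ℝ) (1/2))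
    (K : ℕ) (hK : K = Nat.floor (1 / (2 * ε)) + 1)
    (F : Set ((Fin d → ℝ) → ℝ))
    (hF : ∀ A B : Set (Fin d → ℝ), Disjoint A B →
      A ⊆ Set.Icc 0 1 → B ⊆ Set.Icc 0 1 →
      (∀ a ∈ A, ∀ b ∈ B, 2 * ε ≤ ‖a - b‖) →
      ∃ f ∈ F, (∀ a ∈ A, 0 < f a) ∧ (∀ b ∈ B, f b < 0)) :
    ∃ S : Finset (Fin d → ℝ), ↑S ⊆ Set.Icc (0 : Fin d → ℝ) 1 ∧
      S.card = K ^ d ∧ SignShatters F S :=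
  stmt_6_general d ε hε K hK F hF
end

section
/- Let d ≥ 2, ε ∈ (0, 1/2), K = ⌊1/(2ε)⌋, and c ∈ (0,1); assume K^{d−1} is even. For each labeling φ : {1,…,K}^{d−1} → {−1,1} and each index tuple i = (i₁,…,i_{d−1}), define x_φ(i) ∈ ℝ^d with coordinates (i₁/K, …, i_{d−1}/K, 1/2 + cε·φ(i)). Let F be a family of functions from ℝ^d to ℝ such that for every labeling φ there exists f ∈ F that cε-robustly classifies at least (9/10)·K^{d−1} of the labeled points: the number of index tuples i such that every x' ∈ ℝ^d with ‖x' − x_φ(i)‖∞ ≤ cε satisfies f(x') > 0 if φ(i) = 1 and f(x') < 0 if φ(i) = −1 is at least (9/10)·K^{d−1}. Then there exists a finite set S ⊆ ℝ^d with |S| ≥ K^{d−1}/20 that is sign-shattered by F. -/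
/-- The point `x_φ(i) = (i₁/K, …, i_{d−1}/K, 1/2 + ε₀·φ(i))` of the lower-bound
construction, where the index tuple `i : Fin (d-1) → Fin K` encodes the tuple
`(i₁,…,i_{d−1}) ∈ {1,…,K}^{d−1}` (so the coordinate value is `((i j : ℕ) + 1)/K`). -/
noncomputable def gridPt (d K : ℕ) (ε₀ : ℝ) (φ : (Fin (d - 1) → Fin K) → ℝ)
    (i : Fin (d - 1) → Fin K) : Fin d → ℝ :=
  fun j => if h : (j : ℕ) < d - 1 then (((i ⟨j, h⟩ : ℕ) : ℝ) + 1) / K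
           else 1 / 2 + ε₀ * φ i

/-!
Evaluate the classifiers at the centres `gridPt d K 0 0 i`, which lie within `cε` of the labelled
points: for each labeling `τ` the chosen `f_τ` then has the sign prescribed by `τ` at all centres
outside an error set `E` with `|E| ≤ N/10`, where `N = K^(d-1)`. The data `(E, τ ∩ E, Z)`, with
`Z ⊆ E` the zero set of `f_τ`, take at most `4^r ∑_{j ≤ r} C(N, j)` values (`r = N/10`), and once
they are fixed, `τ` is determined by the positive set of `f_τ`. The positive sets in one fibre form
a family whose shattered sets avoid `Z`, hence are sign-shattered by `F`. If every sign-shattered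
set had fewer than `N/20` points, Sauer–Shelah would bound each fibre by `∑_{k ≤ m} C(N, k)`
(`m < N/20`), and a Chernoff estimate shows that the product of the two bounds is less than `2^N`,
the number of labelings.
-/

open Finset Function

theorem pow_mul_sum_choose_le {N r : ℕ} (hr : r ≤ N) {t : ℝ} (ht₀ : 0 ≤ t) (ht₁ : t ≤ 1) :
    t ^ r * ∑ j ∈ Iic r, (N.choose j : ℝ) ≤ (1 + t) ^ N := by
  calc t ^ r * ∑ j ∈ Iic r, (N.choose j : ℝ)
      ≤ ∑ j ∈ Iic r, t ^ j * (N.choose j : ℝ) := by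
        rw [mul_sum]
        exact sum_le_sum fun j hj =>
          mul_le_mul_of_nonneg_right (pow_le_pow_of_le_one ht₀ ht₁ (mem_Iic.1 hj)) (by positivity)
    _ ≤ ∑ j ∈ range (N + 1), t ^ j * (N.choose j : ℝ) :=
        sum_le_sum_of_subset_of_nonneg (fun j hj => by simp at hj ⊢; omega)
          fun _ _ _ => by positivity
    _ = (1 + t) ^ N := by simp [add_comm 1 t, add_pow]

theorem sum_choose_le_pow_mul_pow {N r : ℕ} (hr : r ≤ N) {s : ℝ} (hs : 1 ≤ s) :
    ∑ j ∈ Iic r, (N.choose j : ℝ) ≤ s ^ r * (1 + 1 / s) ^ N :=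
  calc ∑ j ∈ Iic r, (N.choose j : ℝ)
      = s ^ r * ((1 / s) ^ r * ∑ j ∈ Iic r, (N.choose j : ℝ)) := by
        rw [← mul_assoc, ← mul_pow, mul_one_div_cancel (by positivity), one_pow, one_mul]
    _ ≤ s ^ r * (1 + 1 / s) ^ N := by
        gcongr
        exact pow_mul_sum_choose_le hr (by positivity)
          (by rw [div_le_one₀ (by positivity)]; exact hs)

theorem sum_choose_mul_four_pow_mul_sum_choose_lt_two_pow {N r m : ℕ} (hN : 0 < N)
    (hr : 10 * r ≤ N) (hm : 20 * m ≤ N) :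
    (∑ k ∈ Iic m, N.choose k) * (4 ^ r * ∑ j ∈ Iic r, N.choose j) < 2 ^ N := by
  have hprod : (((∑ k ∈ Iic m, N.choose k) * (4 ^ r * ∑ j ∈ Iic r, N.choose j) : ℕ) : ℝ)
      ≤ 36 ^ r * 19 ^ m * (200 / 171) ^ N :=
    calc _ ≤ (19 : ℝ) ^ m * (1 + 1 / 19) ^ N * (4 ^ r * (9 ^ r * (1 + 1 / 9) ^ N)) := by
          push_cast
          gcongr
          · exact sum_choose_le_pow_mul_pow (by omega) (by norm_num)
          · exact sum_choose_le_pow_mul_pow (by omega) (by norm_num)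
      _ = (4 * 9) ^ r * 19 ^ m * ((1 + 1 / 19) * (1 + 1 / 9)) ^ N := by
          rw [mul_pow, mul_pow]; ring
      _ = 36 ^ r * 19 ^ m * (200 / 171) ^ N := by norm_num
  have h36 : ((36 : ℝ) ^ r) ^ 20 ≤ (36 ^ 2) ^ N := by
    rw [← pow_mul, ← pow_mul]; exact pow_le_pow_right₀ (by norm_num) (by omega)
  have h19 : ((19 : ℝ) ^ m) ^ 20 ≤ 19 ^ N := by
    rw [← pow_mul]; exact pow_le_pow_right₀ (by norm_num) (by omega)
  -- Raising to the 20th power turns the exponents `r ≤ N/10` and `m ≤ N/20` into multiples of `N`.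
  have key : (36 ^ r * 19 ^ m * (200 / 171) ^ N : ℝ) ^ 20 < ((2 : ℝ) ^ N) ^ 20 :=
    calc _ = (36 ^ r) ^ 20 * (19 ^ m) ^ 20 * ((200 / 171 : ℝ) ^ 20) ^ N := by
          rw [mul_pow, mul_pow, pow_right_comm _ N]
      _ ≤ (36 ^ 2) ^ N * 19 ^ N * ((200 / 171 : ℝ) ^ 20) ^ N := by gcongr
      _ = (36 ^ 2 * 19 * (200 / 171) ^ 20) ^ N := by rw [mul_pow, mul_pow]
      _ < (2 ^ 20) ^ N := by gcongr; norm_num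
      _ = (2 ^ N) ^ 20 := by rw [← pow_mul, ← pow_mul, mul_comm]
  exact_mod_cast hprod.trans_lt (lt_of_pow_lt_pow_left₀ 20 (by positivity) key)

theorem card_filter_card_le_le_sum_choose {α : Type*} [Fintype α] (r : ℕ) :
    #({s | #s ≤ r} : Finset (Finset α)) ≤ ∑ k ∈ Iic r, (Fintype.card α).choose k := by
  classical
  simp_rw [← card_univ (α := α), ← card_powersetCard]
  refine (card_le_card fun s hs ↦ mem_biUnion.2 ⟨#s, ?_⟩).trans card_biUnion_le
  exact ⟨mem_Iic.2 (mem_filter.1 hs).2, mem_powersetCard_univ.2 rfl⟩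

theorem card_le_sum_choose_of_forall_shatters {α : Type*} [Fintype α] [DecidableEq α]
    {𝒜 : Finset (Finset α)} {m : ℕ} (h : ∀ s, 𝒜.Shatters s → #s ≤ m) :
    #𝒜 ≤ ∑ k ∈ Iic m, (Fintype.card α).choose k :=
  (card_le_card_shatterer 𝒜).trans <|
    (card_le_card fun s hs => by simpa using h s (mem_shatterer.1 hs)).trans
      (card_filter_card_le_le_sum_choose m)

theorem SignShatters.mono {X : Type*} {F G : Set (X → ℝ)} {S : Finset X}
    (h : SignShatters F S) (hFG : F ⊆ G) : SignShatters G S := fun T hT =>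
  let ⟨f, hf, hsign⟩ := h T hT
  ⟨f, hFG hf, hsign⟩

theorem SignShatters.image {X Y : Type*} [DecidableEq Y] {F : Set (Y → ℝ)} {x : X → Y}
    {S : Finset X} (h : SignShatters ((· ∘ x) '' F) S) : SignShatters F (S.image x) := by
  classical
  intro T hT
  obtain ⟨_, ⟨f, hf, rfl⟩, hpos, hneg⟩ := h {i ∈ S | x i ∈ T} (filter_subset _ _)
  refine ⟨f, hf, fun y hy => ?_, fun y hy hyT => ?_⟩
  · obtain ⟨i, hi, rfl⟩ := mem_image.1 (hT hy)
    exact hpos i (mem_filter.2 ⟨hi, hy⟩)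
  · obtain ⟨i, hi, rfl⟩ := mem_image.1 hy
    exact hneg i hi fun h => hyT (mem_filter.1 h).2

section Labelings

variable {ι : Type*} [Fintype ι] [DecidableEq ι]

noncomputable def positiveSet (g : ι → ℝ) : Finset ι := {i | 0 < g i}

noncomputable def zeroSet (g : ι → ℝ) : Finset ι := {i | g i = 0}

noncomputable def correctSet (g : ι → ℝ) (τ : Finset ι) : Finset ι :=
  {i | (i ∈ τ → 0 < g i) ∧ (i ∉ τ → g i < 0)}

theorem zeroSet_subset_compl_correctSet (g : ι → ℝ) (τ : Finset ι) :
    zeroSet g ⊆ (correctSet g τ)ᶜ := by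
  intro i hi
  simp only [zeroSet, correctSet, mem_compl, mem_filter, mem_univ, true_and] at hi ⊢
  by_cases hτ : i ∈ τ <;> simp [hτ, hi]

theorem mem_iff_mem_positiveSet {g : ι → ℝ} {τ : Finset ι} {i : ι}
    (hi : i ∈ correctSet g τ) : i ∈ τ ↔ i ∈ positiveSet g := by
  simp only [correctSet, positiveSet, mem_filter, mem_univ, true_and] at hi ⊢
  by_cases hτ : i ∈ τ
  · simp [hτ, hi.1 hτ]
  · simp [hτ, (hi.2 hτ).le]

theorem signShatters_of_shatters {G : Finset (ι → ℝ)} {Z : Finset ι}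
    (hZ : ∀ g ∈ G, zeroSet g = Z) {s : Finset ι} (hs : (G.image positiveSet).Shatters s) :
    SignShatters (G : Set (ι → ℝ)) s := by
  obtain ⟨_, hu, hsu⟩ := hs.exists_superset
  obtain ⟨g₀, hg₀, rfl⟩ := mem_image.1 hu
  have hsZ : ∀ i ∈ s, i ∉ Z := fun i hi hiZ => by
    have hpos := hsu hi
    rw [← hZ g₀ hg₀] at hiZ
    simp only [positiveSet, zeroSet, mem_filter, mem_univ, true_and] at hpos hiZ
    exact hpos.ne' hiZ
  intro t ht
  obtain ⟨_, hu, rfl⟩ := hs ht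
  obtain ⟨g, hg, rfl⟩ := mem_image.1 hu
  refine ⟨g, hg, fun i hi => ?_, fun i hi hit => ?_⟩
  · simpa [positiveSet] using (mem_inter.1 hi).2
  · have hnonpos : ¬ 0 < g i := fun h => hit (mem_inter.2 ⟨hi, by simpa [positiveSet] using h⟩)
    have hne : g i ≠ 0 := fun h => hsZ i hi (hZ g hg ▸ by simpa [zeroSet] using h)
    exact lt_of_le_of_ne (not_lt.1 hnonpos) hne

variable {g : Finset ι → ι → ℝ} {m : ℕ}

theorem card_le_sum_choose_of_compl_correctSet_eq
    (hsh : ∀ S, SignShatters (Set.range g) S → #S ≤ m)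
    {𝒯 : Finset (Finset ι)} {E σ Z : Finset ι} (hE : ∀ τ ∈ 𝒯, (correctSet (g τ) τ)ᶜ = E)
    (hσ : ∀ τ ∈ 𝒯, τ ∩ E = σ) (hZ : ∀ τ ∈ 𝒯, zeroSet (g τ) = Z) :
    #𝒯 ≤ ∑ k ∈ Iic m, (Fintype.card ι).choose k := by
  have hinj : Set.InjOn (fun τ => positiveSet (g τ)) 𝒯 := by
    intro τ₁ h₁ τ₂ h₂ hpos
    ext i
    by_cases hi : i ∈ E
    · simpa [hi] using congrArg (i ∈ ·) ((hσ τ₁ h₁).trans (hσ τ₂ h₂).symm)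
    · have hc₁ : i ∈ correctSet (g τ₁) τ₁ := by simpa [← hE τ₁ h₁] using hi
      have hc₂ : i ∈ correctSet (g τ₂) τ₂ := by simpa [← hE τ₂ h₂] using hi
      rw [mem_iff_mem_positiveSet hc₁, mem_iff_mem_positiveSet hc₂]
      exact Iff.of_eq (congrArg (i ∈ ·) hpos)
  rw [← card_image_of_injOn hinj, ← comp_def, ← image_image]
  refine card_le_sum_choose_of_forall_shatters fun s hs => hsh s ?_
  refine (signShatters_of_shatters (Z := Z) ?_ hs).mono ?_
  · exact forall_mem_image.2 hZ
  · rw [coe_image]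
    exact Set.image_subset_range g _

theorem card_le_sum_choose_mul_of_compl_correctSet_eq
    (hsh : ∀ S, SignShatters (Set.range g) S → #S ≤ m)
    {𝒯 : Finset (Finset ι)} {E : Finset ι} {r : ℕ} (hEr : #E ≤ r)
    (hE : ∀ τ ∈ 𝒯, (correctSet (g τ) τ)ᶜ = E) :
    #𝒯 ≤ (∑ k ∈ Iic m, (Fintype.card ι).choose k) * 4 ^ r :=
  calc #𝒯 ≤ (∑ k ∈ Iic m, (Fintype.card ι).choose k) * #(E.powerset ×ˢ E.powerset) :=
        card_le_mul_card_image_of_maps_to (f := fun τ => (τ ∩ E, zeroSet (g τ)))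
          (fun τ hτ => mem_product.2 ⟨mem_powerset.2 inter_subset_right,
            mem_powerset.2 (hE τ hτ ▸ zeroSet_subset_compl_correctSet _ _)⟩) _
          fun _ _ => card_le_sum_choose_of_compl_correctSet_eq hsh
            (fun τ hτ => hE τ (mem_filter.1 hτ).1)
            (fun τ hτ => congrArg Prod.fst (mem_filter.1 hτ).2)
            (fun τ hτ => congrArg Prod.snd (mem_filter.1 hτ).2)
    _ ≤ (∑ k ∈ Iic m, (Fintype.card ι).choose k) * 4 ^ r := by
        rw [card_product, card_powerset, ← mul_pow]
        exact Nat.mul_le_mul_left _ (Nat.pow_le_pow_of_le (by norm_num) hEr)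

theorem two_pow_card_le_sum_choose_mul (hsh : ∀ S, SignShatters (Set.range g) S → #S ≤ m) {r : ℕ}
    (herr : ∀ τ, #(correctSet (g τ) τ)ᶜ ≤ r) :
    2 ^ Fintype.card ι ≤ (∑ k ∈ Iic m, (Fintype.card ι).choose k) *
      (4 ^ r * ∑ j ∈ Iic r, (Fintype.card ι).choose j) :=
  calc 2 ^ Fintype.card ι = #(univ : Finset (Finset ι)) := by simp
    _ ≤ (∑ k ∈ Iic m, (Fintype.card ι).choose k) * 4 ^ r * #({E | #E ≤ r} : Finset (Finset ι)) :=
        card_le_mul_card_image_of_maps_to (f := fun τ => (correctSet (g τ) τ)ᶜ)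
          (fun τ _ => mem_filter.2 ⟨mem_univ _, herr τ⟩) _
          fun _ hE => card_le_sum_choose_mul_of_compl_correctSet_eq hsh (mem_filter.1 hE).2
            fun τ hτ => (mem_filter.1 hτ).2
    _ ≤ _ := by
        rw [mul_assoc]
        gcongr
        exact card_filter_card_le_le_sum_choose r

theorem exists_signShatters_of_forall_correctSet (F : Set (ι → ℝ))
    (hF : ∀ τ : Finset ι, ∃ g ∈ F, 9 * Fintype.card ι ≤ 10 * #(correctSet g τ)) :
    ∃ S : Finset ι, Fintype.card ι ≤ 20 * #S ∧ SignShatters F S := by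
  by_contra! hsmall
  choose g hgF hg using hF
  have hN : 0 < Fintype.card ι := by
    by_contra! h0
    exact hsmall ∅ (by omega) fun T hT => ⟨g ∅, hgF ∅, by simp [subset_empty.1 hT], by simp⟩
  have hsh : ∀ S, SignShatters (Set.range g) S → #S ≤ (Fintype.card ι - 1) / 20 := by
    intro S hS
    by_contra! hlarge
    exact hsmall S (by omega) (hS.mono (Set.range_subset_iff.2 hgF))
  have herr : ∀ τ, #(correctSet (g τ) τ)ᶜ ≤ Fintype.card ι / 10 := by
    intro τ
    have := hg τ
    have := card_le_univ (correctSet (g τ) τ)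
    rw [card_compl]
    omega
  exact (two_pow_card_le_sum_choose_mul hsh herr).not_gt
    (sum_choose_mul_four_pow_mul_sum_choose_lt_two_pow hN (by omega) (by omega))

end Labelings

theorem exists_signShatters_of_forall_comp_correctSet {ι X : Type*} [Fintype ι] [DecidableEq ι]
    [DecidableEq X] (F : Set (X → ℝ)) {x : ι → X} (hx : Injective x)
    (hF : ∀ τ : Finset ι, ∃ f ∈ F, 9 * Fintype.card ι ≤ 10 * #(correctSet (f ∘ x) τ)) :
    ∃ S : Finset X, Fintype.card ι ≤ 20 * #S ∧ SignShatters F S := by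
  obtain ⟨S, hS, hshat⟩ := exists_signShatters_of_forall_correctSet ((· ∘ x) '' F) fun τ =>
    let ⟨f, hf, hcorrect⟩ := hF τ
    ⟨f ∘ x, ⟨f, hf, rfl⟩, hcorrect⟩
  exact ⟨S.image x, by rwa [card_image_of_injective S hx], hshat.image⟩

theorem gridPt_injective (d K : ℕ) (ε₀ : ℝ) (φ : (Fin (d - 1) → Fin K) → ℝ) :
    Injective (gridPt d K ε₀ φ) := by
  intro i₁ i₂ h
  funext j
  have hK : (K : ℝ) ≠ 0 := Nat.cast_ne_zero.2 (i₁ j).pos.ne'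
  have hj := congrFun h ⟨j, j.2.trans_le (Nat.sub_le d 1)⟩
  simp only [gridPt, j.2, dif_pos] at hj
  exact Fin.ext (by exact_mod_cast add_right_cancel ((div_left_inj' hK).1 hj))

theorem norm_gridPt_sub_gridPt_le (d K : ℕ) (a b : ℝ) (φ ψ : (Fin (d - 1) → Fin K) → ℝ)
    (i : Fin (d - 1) → Fin K) :
    ‖gridPt d K a φ i - gridPt d K b ψ i‖ ≤ |a * φ i - b * ψ i| := by
  refine (pi_norm_le_iff_of_nonneg (abs_nonneg _)).2 fun j => ?_
  by_cases hj : (j : ℕ) < d - 1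
  · simp [gridPt, hj]
  · simp only [gridPt, hj, dif_neg, not_false_eq_true, Pi.sub_apply, Real.norm_eq_abs]
    rw [add_sub_add_left_eq_sub]

theorem setOf_forall_ball_subset_correctSet {d K : ℕ} {ε₀ : ℝ} (hε₀ : 0 ≤ ε₀)
    (f : (Fin d → ℝ) → ℝ) (τ : Finset (Fin (d - 1) → Fin K)) :
    {i | ∀ x' : Fin d → ℝ,
        ‖x' - gridPt d K ε₀ (fun i => if i ∈ τ then 1 else -1) i‖ ≤ ε₀ →
          (((if i ∈ τ then 1 else -1 : ℝ) = 1 → 0 < f x') ∧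
            ((if i ∈ τ then 1 else -1 : ℝ) = -1 → f x' < 0))} ⊆
      ↑(correctSet (f ∘ gridPt d K 0 0) τ) := by
  intro i hi
  have hcentre := hi (gridPt d K 0 0 i)
    ((norm_gridPt_sub_gridPt_le d K 0 ε₀ 0 _ i).trans (by
      by_cases hiτ : i ∈ τ <;> simp [hiτ, abs_of_nonneg hε₀]))
  by_cases hiτ : i ∈ τ <;> simp [hiτ] at hcentre <;> simp [correctSet, hiτ, hcentre]

theorem stmt_10_general (d K : ℕ) (ε c : ℝ) (hε : ε ∈ Set.Ioo (0 : ℝ) (1/2))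
    (hc : c ∈ Set.Ioo (0 : ℝ) 1)
    (F : Set ((Fin d → ℝ) → ℝ))
    (hF : ∀ φ : (Fin (d - 1) → Fin K) → ℝ, (∀ i, φ i = 1 ∨ φ i = -1) →
      ∃ f ∈ F, (9 : ℝ) / 10 * K ^ (d - 1) ≤
        ({i : Fin (d - 1) → Fin K |
          ∀ x' : Fin d → ℝ, ‖x' - gridPt d K (c * ε) φ i‖ ≤ c * ε →
            ((φ i = 1 → 0 < f x') ∧ (φ i = -1 → f x' < 0))}.ncard : ℝ)) :
    ∃ S : Finset (Fin d → ℝ), (K : ℝ) ^ (d - 1) / 20 ≤ (S.card : ℝ) ∧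
      SignShatters F S := by
  have hcε : 0 ≤ c * ε := (mul_pos hc.1 hε.1).le
  obtain ⟨S, hS, hshat⟩ :=
    exists_signShatters_of_forall_comp_correctSet F (gridPt_injective d K 0 0) fun τ => by
      obtain ⟨f, hf, hrobust⟩ := hF (fun i => if i ∈ τ then 1 else -1)
        fun i => by by_cases hi : i ∈ τ <;> simp [hi]
      have hcorrect := hrobust.trans
        (Nat.cast_le.2 (Set.ncard_le_ncard (setOf_forall_ball_subset_correctSet hcε f τ)))
      rw [Set.ncard_coe_finset] at hcorrect
      refine ⟨f, hf, ?_⟩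
      simp only [Fintype.card_fun, Fintype.card_fin]
      exact_mod_cast (by linarith : (9 * K ^ (d - 1) : ℝ) ≤ 10 * #(correctSet _ τ))
  refine ⟨S, ?_, hshat⟩
  have : ((K ^ (d - 1) : ℕ) : ℝ) ≤ 20 * S.card := by exact_mod_cast (by simpa using hS)
  push_cast at this
  linarith

theorem stmt_10 (d K : ℕ) (hd : 2 ≤ d) (ε c : ℝ) (hε : ε ∈ Set.Ioo (0 : ℝ) (1/2))
    (hK : K = Nat.floor (1 / (2 * ε))) (hc : c ∈ Set.Ioo (0 : ℝ) 1)
    (heven : Even (K ^ (d - 1)))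
    (F : Set ((Fin d → ℝ) → ℝ))
    (hF : ∀ φ : (Fin (d - 1) → Fin K) → ℝ, (∀ i, φ i = 1 ∨ φ i = -1) →
      ∃ f ∈ F, (9 : ℝ) / 10 * K ^ (d - 1) ≤
        ({i : Fin (d - 1) → Fin K |
          ∀ x' : Fin d → ℝ, ‖x' - gridPt d K (c * ε) φ i‖ ≤ c * ε →
            ((φ i = 1 → 0 < f x') ∧ (φ i = -1 → f x' < 0))}.ncard : ℝ)) :
    ∃ S : Finset (Fin d → ℝ), (K : ℝ) ^ (d - 1) / 20 ≤ (S.card : ℝ) ∧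
      SignShatters F S :=
  stmt_10_general d K ε c hε hc F hF
end

section
/- Let S be a finite set with |S| = n, and let V ≤ m ≤ n be natural numbers. Let H be a set of functions from S to {−1, 1} such that for every labeling φ : S → {−1, 1} there exists h ∈ H with |{x ∈ S : h(x) = φ(x)}| ≥ m. Then there exists a subset T ⊆ S with |T| = V such that the number of functions ψ : T → {−1, 1} for which some h ∈ H satisfies h(x) = ψ(x) for all x ∈ T is at least 2^V · C(m, V) / C(n, V), where C(a, b) denotes the binomial coefficient. -/
/-!
Double count the pairs `(φ, T)` of a labeling `φ : α → L` and a `V`-subset `T` on which some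
`h ∈ H` agrees with `φ`. Each of the `|L|^n` labelings agrees with some `h` on at least `m` points,
hence lies in at least `C(m, V)` pairs. A labeling in a pair with `T` is determined by its pattern
on `T`, which `H` realizes, and by its `|L|^(n - V)` possible values off `T`. Hence the numbers of
patterns on the `C(n, V)` subsets `T` sum to at least `|L|^V C(m, V)`, and some `T` reaches the
average.
-/

open Finset Fintype

namespace Realizability

variable {α β : Type*}

def RealizesOn (H : Set (α → β)) (T : Finset α) (φ : α → β) : Prop :=
  ∃ h ∈ H, ∀ x ∈ T, h x = φ x

def patterns (H : Set (α → β)) (L : Finset β) (T : Set α) : Set (T → β) :=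
  {ψ | (∀ x, ψ x ∈ L) ∧ ∃ h ∈ H, ∀ x : T, h x = ψ x}

theorem patterns_finite [Finite α] (H : Set (α → β)) (L : Finset β) (T : Set α) :
    (patterns H L T).Finite :=
  (Set.Finite.pi fun _ => L.finite_toSet).subset fun _ hψ x _ => hψ.1 x

variable [Fintype α]

open scoped Classical

theorem choose_le_card_realizesOn {H : Set (α → β)} {h φ : α → β} (hH : h ∈ H) {m : ℕ}
    (hm : m ≤ #{x | h x = φ x}) (V : ℕ) :
    m.choose V ≤ #{T ∈ powersetCard V univ | RealizesOn H T φ} :=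
  calc m.choose V ≤ (#{x | h x = φ x}).choose V := Nat.choose_le_choose V hm
    _ = #(powersetCard V {x | h x = φ x}) := (card_powersetCard _ _).symm
    _ ≤ _ := card_le_card fun T hT => by
      obtain ⟨hTsub, hTcard⟩ := mem_powersetCard.mp hT
      exact mem_filter.mpr ⟨mem_powersetCard.mpr ⟨subset_univ T, hTcard⟩,
        h, hH, fun x hx => (mem_filter.mp (hTsub hx)).2⟩

theorem card_realizesOn_le (H : Set (α → β)) (L : Finset β) (T : Finset α) :
    #{φ ∈ piFinset fun _ => L | RealizesOn H T φ} ≤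
      (patterns H L T).ncard * #L ^ (card α - #T) := by
  let split := Equiv.piEquivPiSubtypeProd (· ∈ T) fun _ => β
  have hmaps : ∀ φ ∈ {φ ∈ piFinset fun _ : α => L | RealizesOn H T φ},
      split φ ∈ (patterns_finite H L T).toFinset ×ˢ piFinset fun _ : {x // x ∉ T} => L := by
    intro φ hφ
    obtain ⟨hφL, h, hH, hagree⟩ := mem_filter.mp hφ
    rw [mem_piFinset] at hφL
    exact mem_product.mpr ⟨(patterns_finite H L T).mem_toFinset.mpr
      ⟨fun x => hφL x, h, hH, fun x => hagree x x.2⟩, mem_piFinset.mpr fun x => hφL x⟩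
  have := card_le_card_of_injOn split hmaps split.injective.injOn
  rwa [card_product, ← Set.ncard_eq_toFinset_card _ (patterns_finite H L T), card_piFinset,
    prod_const, card_univ, card_subtype_compl, card_coe] at this

theorem pow_mul_choose_le_sum_ncard_patterns {H : Set (α → β)} {L : Finset β} (hL : L.Nonempty)
    {m V : ℕ} (hVn : V ≤ card α)
    (hcover : ∀ φ ∈ piFinset fun _ : α => L, ∃ h ∈ H, m ≤ #{x | h x = φ x}) :
    #L ^ V * m.choose V ≤ ∑ T ∈ powersetCard V (univ : Finset α), (patterns H L T).ncard := by
  let r (φ : α → β) (T : Finset α) : Prop := RealizesOn H T φ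
  have hlower : #L ^ card α * m.choose V ≤
      ∑ φ ∈ piFinset fun _ : α => L, #((powersetCard V univ).bipartiteAbove r φ) := by
    have := card_nsmul_le_sum (piFinset fun _ : α => L) _ (m.choose V) fun φ hφ =>
      (hcover φ hφ).elim fun h ⟨hH, hm⟩ => choose_le_card_realizesOn hH hm V
    rwa [card_piFinset, prod_const, card_univ, smul_eq_mul] at this
  have hupper : ∑ φ ∈ piFinset fun _ : α => L, #((powersetCard V univ).bipartiteAbove r φ) ≤
      (∑ T ∈ powersetCard V (univ : Finset α), (patterns H L T).ncard) * #L ^ (card α - V) := by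
    rw [sum_card_bipartiteAbove_eq_sum_card_bipartiteBelow, sum_mul]
    exact sum_le_sum fun T hT => (mem_powersetCard.mp hT).2 ▸ card_realizesOn_le H L T
  refine Nat.le_of_mul_le_mul_right ?_ (pow_pos hL.card_pos (card α - V))
  rw [mul_right_comm, ← pow_add, Nat.add_sub_cancel' hVn]
  exact hlower.trans hupper

theorem exists_card_eq_and_le_ncard_patterns {H : Set (α → β)} {L : Finset β} (hL : L.Nonempty)
    {m V : ℕ} (hVn : V ≤ card α)
    (hcover : ∀ φ ∈ piFinset fun _ : α => L, ∃ h ∈ H, m ≤ #{x | h x = φ x}) :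
    ∃ T : Finset α, #T = V ∧
      (#L : ℝ) ^ V * m.choose V / (card α).choose V ≤ (patterns H L T).ncard := by
  have hchoose : (0 : ℝ) < (card α).choose V := by exact_mod_cast Nat.choose_pos hVn
  obtain ⟨T, hT, hle⟩ := exists_le_of_sum_le (s := powersetCard V univ)
    (powersetCard_nonempty.mpr (by rwa [card_univ]))
    (f := fun _ => (#L : ℝ) ^ V * m.choose V / (card α).choose V)
    (g := fun T : Finset α => ((patterns H L T).ncard : ℝ)) (by
      rw [sum_const, card_powersetCard, card_univ, nsmul_eq_mul, mul_div_cancel₀ _ hchoose.ne']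
      exact_mod_cast pow_mul_choose_le_sum_ncard_patterns hL hVn hcover)
  exact ⟨T, (mem_powersetCard.mp hT).2, hle⟩

end Realizability

theorem stmt_11_general {α : Type*} [Fintype α] (n m V : ℕ) (hcard : Fintype.card α = n)
    (hVm : V ≤ m) (hmn : m ≤ n)
    (H : Set (α → ℤ))
    (hcover : ∀ φ : α → ℤ, (∀ x, φ x = 1 ∨ φ x = -1) →
      ∃ h ∈ H, m ≤ {x | h x = φ x}.ncard) :
    ∃ T : Finset α, T.card = V ∧
      (2 : ℝ) ^ V * (m.choose V) / (n.choose V) ≤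
        ({ψ : (↑T : Set α) → ℤ | (∀ x, ψ x = 1 ∨ ψ x = -1) ∧
          ∃ h ∈ H, ∀ x : (↑T : Set α), h ↑x = ψ x}.ncard : ℝ) := by
  classical
  subst hcard
  obtain ⟨T, hTV, hT⟩ := Realizability.exists_card_eq_and_le_ncard_patterns
    (L := {1, -1}) (insert_nonempty _ _) (m := m) (hVm.trans hmn) fun φ hφ => by
      obtain ⟨h, hH, hm⟩ := hcover φ (by simpa using hφ)
      rw [Set.ncard_eq_toFinset_card', Set.toFinset_ofPred] at hm
      exact ⟨h, hH, by convert hm⟩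
  refine ⟨T, hTV, ?_⟩
  convert hT using 3
  · rfl
  · ext ψ
    simp [Realizability.patterns]

theorem stmt_11 {α : Type*} [Fintype α] (n m V : ℕ) (hcard : Fintype.card α = n)
    (hVm : V ≤ m) (hmn : m ≤ n)
    (H : Set (α → ℤ)) (hH : ∀ h ∈ H, ∀ x, h x = 1 ∨ h x = -1)
    (hcover : ∀ φ : α → ℤ, (∀ x, φ x = 1 ∨ φ x = -1) →
      ∃ h ∈ H, m ≤ {x | h x = φ x}.ncard) :
    ∃ T : Finset α, T.card = V ∧
      (2 : ℝ) ^ V * (m.choose V) / (n.choose V) ≤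
        ({ψ : (↑T : Set α) → ℤ | (∀ x, ψ x = 1 ∨ ψ x = -1) ∧
          ∃ h ∈ H, ∀ x : (↑T : Set α), h ↑x = ψ x}.ncard : ℝ) :=
  stmt_11_general n m V hcard hVm hmn H hcover
end

section
/- For all natural numbers V, m, n with V ≤ m ≤ n and V < n, one has C(m, V) · (n − V)^V ≥ C(n, V) · (m − V)^V, where C(a, b) denotes the binomial coefficient. Equivalently, C(m, V)/C(n, V) ≥ ((m − V)/(n − V))^V. -/
/-!
Writing `C(a, V) * V! = a (a - 1) ⋯ (a - V + 1)`, the inequality compares two products of `V`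
factors termwise: `(n - i) * (m - V) ≤ (m - i) * (n - V)` for every `i ≤ V`, since the difference
of the two sides is `(V - i) * (n - m)`.
-/

namespace Nat

theorem sub_mul_sub_le_sub_mul_sub {i V m n : ℕ} (hiV : i ≤ V) (hmn : m ≤ n) :
    (n - i) * (m - V) ≤ (m - i) * (n - V) := by
  rcases le_total m V with hmV | hVm
  · simp [Nat.sub_eq_zero_of_le hmV]
  · zify [hiV.trans hVm, hVm, hVm.trans hmn, (hiV.trans hVm).trans hmn]
    nlinarith [Int.ofNat_le.mpr hmn, Int.ofNat_le.mpr hiV]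

theorem descFactorial_mul_sub_pow_le {m n : ℕ} (hmn : m ≤ n) (V : ℕ) :
    n.descFactorial V * (m - V) ^ V ≤ m.descFactorial V * (n - V) ^ V := by
  simp only [descFactorial_eq_prod_range, Finset.pow_eq_prod_const, ← Finset.prod_mul_distrib]
  exact Finset.prod_le_prod' fun i hi =>
    sub_mul_sub_le_sub_mul_sub (Finset.mem_range.mp hi).le hmn

end Nat

theorem stmt_12_general (V m n : ℕ) (hmn : m ≤ n) :
    n.choose V * (m - V) ^ V ≤ m.choose V * (n - V) ^ V := by
  have h := Nat.descFactorial_mul_sub_pow_le hmn V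
  rw [Nat.descFactorial_eq_factorial_mul_choose, Nat.descFactorial_eq_factorial_mul_choose,
    mul_assoc, mul_assoc] at h
  exact Nat.le_of_mul_le_mul_left h V.factorial_pos

theorem stmt_12 (V m n : ℕ) (hVm : V ≤ m) (hmn : m ≤ n) (hVn : V < n) :
    n.choose V * (m - V) ^ V ≤ m.choose V * (n - V) ^ V :=
  stmt_12_general V m n hmn
end

section
/- Let S be a finite set with |S| = n, let r ≤ n and l be natural numbers, and let H be a set of functions from S to {−1, 1}. Suppose (i) for every u : S → {−1, 1} there exists h ∈ H with |{x ∈ S : h(x) ≠ u(x)}| ≤ r, and (ii) every subset T ⊆ S that is shattered by H satisfies |T| ≤ l. Then (Σ_{j=0}^{l} C(n, j)) · (Σ_{i=0}^{r} C(n, i)) ≥ 2^n, where C(n, i) denotes the binomial coefficient. -/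
/-!
Identify a sign vector `h` with the set `{x | h x = 1}`, so that Hamming distance becomes the size
of a symmetric difference. By (i) the `2 ^ n` subsets of `S` are covered by the balls of radius `r`
around the sets coming from `H`, and each such ball has `∑_{i ≤ r} C(n, i)` elements. By (ii)
the family of sets coming from `H` shatters no set of more than `l` elements, so by the
Sauer–Shelah lemma it has at most `∑_{j ≤ l} C(n, j)` members.
-/

open Finset
open scoped symmDiff

section
variable {α : Type*} [Fintype α]

lemma card_filter_card_le (k : ℕ) :
    #{T : Finset α | #T ≤ k} = ∑ j ∈ Iic k, (Fintype.card α).choose j := by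
  rw [card_eq_sum_card_fiberwise (f := card) (t := Iic k) (fun T hT ↦ by simpa using hT)]
  refine sum_congr rfl fun j hj ↦ ?_
  rw [← card_univ, ← card_powersetCard, powersetCard_eq_filter, powerset_univ, filter_filter]
  congr 1
  exact filter_congr fun T _ ↦ ⟨And.right, fun h ↦ ⟨h ▸ mem_Iic.1 hj, h⟩⟩

variable [DecidableEq α]

lemma card_filter_card_symmDiff_le (A : Finset α) (r : ℕ) :
    #{B : Finset α | #(A ∆ B) ≤ r} = #{T : Finset α | #T ≤ r} :=
  card_equiv ((symmDiff_right_involutive A).toPerm _) (by simp)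

lemma two_pow_card_le_card_mul_sum_choose {𝒜 : Finset (Finset α)} {r : ℕ}
    (h𝒜 : ∀ B, ∃ A ∈ 𝒜, #(A ∆ B) ≤ r) :
    2 ^ Fintype.card α ≤ #𝒜 * ∑ i ∈ Iic r, (Fintype.card α).choose i := by
  have hcover : (univ : Finset (Finset α)) ⊆ 𝒜.biUnion fun A ↦ {B | #(A ∆ B) ≤ r} := by
    intro B _
    obtain ⟨A, hA, hAB⟩ := h𝒜 B
    exact mem_biUnion.2 ⟨A, hA, by simpa using hAB⟩
  calc 2 ^ Fintype.card α = #(univ : Finset (Finset α)) := by simp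
    _ ≤ ∑ A ∈ 𝒜, #{B : Finset α | #(A ∆ B) ≤ r} := (card_le_card hcover).trans card_biUnion_le
    _ = #𝒜 * ∑ i ∈ Iic r, (Fintype.card α).choose i := by
      simp [card_filter_card_symmDiff_le, card_filter_card_le]

lemma card_le_sum_choose_of_forall_shatters_card_le {𝒜 : Finset (Finset α)} {l : ℕ}
    (h𝒜 : ∀ T, 𝒜.Shatters T → #T ≤ l) :
    #𝒜 ≤ ∑ j ∈ Iic l, (Fintype.card α).choose j :=
  calc #𝒜 ≤ #𝒜.shatterer := card_le_card_shatterer 𝒜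
    _ ≤ ∑ j ∈ Iic 𝒜.vcDim, (Fintype.card α).choose j := card_shatterer_le_sum_vcDim
    _ ≤ ∑ j ∈ Iic l, (Fintype.card α).choose j :=
      sum_le_sum_of_subset <| Iic_subset_Iic.2 <|
        Finset.sup_le fun T hT ↦ h𝒜 T (mem_shatterer.1 hT)

lemma forall_mem_eq_of_inter_filter_eq {h ψ : α → ℤ} (hh : ∀ x, h x = 1 ∨ h x = -1)
    (hψ : ∀ x, ψ x = 1 ∨ ψ x = -1) {T : Finset α}
    (hT : T ∩ ({x | h x = 1} : Finset α) = {x ∈ T | ψ x = 1}) :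
    ∀ x ∈ T, h x = ψ x := by
  intro x hx
  have hx' := congrArg (x ∈ ·) hT
  simp only [mem_inter, mem_filter, mem_univ, true_and, hx, eq_iff_iff] at hx'
  rcases hh x with h1 | h1 <;> rcases hψ x with h2 | h2 <;> simp_all

lemma card_symmDiff_filter_le_ncard (h : α → ℤ) (B : Finset α) :
    #(({x | h x = 1} : Finset α) ∆ B) ≤ {x | h x ≠ if x ∈ B then 1 else -1}.ncard := by
  rw [← Set.ncard_coe_finset]
  refine Set.ncard_le_ncard (fun x hx ↦ ?_) (Set.toFinite _)
  by_cases hxB : x ∈ B <;> simp_all [Set.mem_symmDiff]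
end

theorem stmt_14_general {α : Type*} [Fintype α] (n r l : ℕ) (hcard : Fintype.card α = n)
    (H : Set (α → ℤ)) (hH : ∀ h ∈ H, ∀ x, h x = 1 ∨ h x = -1)
    (hcover : ∀ u : α → ℤ, (∀ x, u x = 1 ∨ u x = -1) →
      ∃ h ∈ H, {x | h x ≠ u x}.ncard ≤ r)
    (hvc : ∀ T : Finset α,
      (∀ ψ : α → ℤ, (∀ x, ψ x = 1 ∨ ψ x = -1) → ∃ h ∈ H, ∀ x ∈ T, h x = ψ x) →
      T.card ≤ l) :
    2 ^ n ≤ (∑ j ∈ Finset.range (l + 1), n.choose j) *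
      (∑ i ∈ Finset.range (r + 1), n.choose i) := by
  classical
  subst hcard
  set 𝒜 : Finset (Finset α) := {A | ∃ h ∈ H, ({x | h x = 1} : Finset α) = A}
  have hshatters : ∀ T, 𝒜.Shatters T → #T ≤ l := fun T hT ↦ hvc T fun ψ hψ ↦ by
    obtain ⟨A, hA, hTA⟩ := hT (filter_subset (ψ · = 1) T)
    obtain ⟨h, hh, rfl⟩ := (mem_filter.1 hA).2
    exact ⟨h, hh, forall_mem_eq_of_inter_filter_eq (hH h hh) hψ hTA⟩
  have hcovers : ∀ B, ∃ A ∈ 𝒜, #(A ∆ B) ≤ r := fun B ↦ by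
    obtain ⟨h, hh, hhB⟩ := hcover (fun x ↦ if x ∈ B then 1 else -1) fun x ↦ by
      split_ifs <;> simp
    exact ⟨_, mem_filter.2 ⟨mem_univ _, h, hh, rfl⟩, (card_symmDiff_filter_le_ncard h B).trans hhB⟩
  rw [Nat.range_succ_eq_Iic, Nat.range_succ_eq_Iic]
  exact (two_pow_card_le_card_mul_sum_choose hcovers).trans
    (Nat.mul_le_mul_right _ (card_le_sum_choose_of_forall_shatters_card_le hshatters))

theorem stmt_14 {α : Type*} [Fintype α] (n r l : ℕ) (hcard : Fintype.card α = n)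
    (hr : r ≤ n)
    (H : Set (α → ℤ)) (hH : ∀ h ∈ H, ∀ x, h x = 1 ∨ h x = -1)
    (hcover : ∀ u : α → ℤ, (∀ x, u x = 1 ∨ u x = -1) →
      ∃ h ∈ H, {x | h x ≠ u x}.ncard ≤ r)
    (hvc : ∀ T : Finset α,
      (∀ ψ : α → ℤ, (∀ x, ψ x = 1 ∨ ψ x = -1) → ∃ h ∈ H, ∀ x ∈ T, h x = ψ x) →
      T.card ≤ l) :
    2 ^ n ≤ (∑ j ∈ Finset.range (l + 1), n.choose j) *
      (∑ i ∈ Finset.range (r + 1), n.choose i) :=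
  stmt_14_general n r l hcard H hH hcover hvc
end
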